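/- arXiv:2204.07115 — 9 statements merged into one kernel-verified Lean document; each statement's English description precedes it below -/
import Mathlib

section
/- Fix a penalty function α: M₁ → ℝ ∪ {+∞} with inf_{Q ∈ M₁} α(Q) > −∞, and define ρ(X̃) = sup_{Q ∈ M₁} ( E_Q[−X̃] − α(Q) ) for X̃ ∈ X. For a probability measure P and X ∈ L^∞(P), define ρ^P(X) = inf_{X̃: P(X̃=X)=1} ρ(X̃), ρ̃^P(X) = sup_{Q ∈ M₁} inf_{X̃: P(X̃=X)=1} ( E_Q[−X̃] − α(Q) ), and ρ̂^P(X) = sup_{Q ≪ P} ( E_Q[−X] − α(Q) ). Then ρ^P(X) ≥ ρ̃^P(X) = ρ̂^P(X). -/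
open MeasureTheory Set

variable {Ω : Type*} [MeasurableSpace Ω]

/-- Bounded measurable `P`-versions of `X`. -/
def versions (P : Measure Ω) (X : Ω → ℝ) : Set (Ω → ℝ) :=
  {Y | Measurable Y ∧ (∃ K : ℝ, ∀ ω, |Y ω| ≤ K) ∧ ∀ᵐ ω ∂P, Y ω = X ω}

/-- `E_Q[-Y]` as an extended real. -/
noncomputable def negExp (Q : Measure Ω) (Y : Ω → ℝ) : EReal :=
  ((∫ ω, -Y ω ∂Q : ℝ) : EReal)

lemma integrable_of_bdd {Q : Measure Ω} [IsFiniteMeasure Q] {f : Ω → ℝ}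
    (hf : Measurable f) (hb : ∃ K : ℝ, ∀ ω, |f ω| ≤ K) : Integrable f Q := by
  obtain ⟨K, hK⟩ := hb
  exact (integrable_const K).mono' hf.aestronglyMeasurable
    (Filter.Eventually.of_forall fun ω => by simpa using hK ω)

/-- With `ρ` given by a penalty function `α` bounded from below, one has
`ρ^P(X) ≥ ρ̃^P(X) = ρ̂^P(X)`. -/
theorem stmt3 (α : Measure Ω → EReal)
    (hlb : ∃ c : ℝ, ∀ Q : Measure Ω, IsProbabilityMeasure Q → (c : EReal) ≤ α Q)
    (P : Measure Ω) [IsProbabilityMeasure P]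
    (X : Ω → ℝ) (hXmeas : Measurable X) (hXbdd : ∃ K : ℝ, ∀ ω, |X ω| ≤ K) :
    (⨆ Q : {Q : Measure Ω // IsProbabilityMeasure Q},
        ⨅ Y ∈ versions P X, (negExp Q.1 Y - α Q.1)) =
      (⨆ Q : {Q : Measure Ω // IsProbabilityMeasure Q ∧ Q ≪ P},
        (negExp Q.1 X - α Q.1)) ∧
    (⨆ Q : {Q : Measure Ω // IsProbabilityMeasure Q},
        ⨅ Y ∈ versions P X, (negExp Q.1 Y - α Q.1)) ≤
      ⨅ Y ∈ versions P X,
        ⨆ Q : {Q : Measure Ω // IsProbabilityMeasure Q}, (negExp Q.1 Y - α Q.1) := by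
  classical
  obtain ⟨c, hc⟩ := hlb
  have hXv : X ∈ versions P X :=
    ⟨hXmeas, hXbdd, Filter.Eventually.of_forall fun _ => rfl⟩
  constructor
  · apply le_antisymm
    · refine iSup_le fun ⟨Q, hQ⟩ => ?_
      haveI := hQ
      by_cases hatop : α Q = ⊤
      · refine le_trans (iInf₂_le X hXv) ?_
        rw [hatop, EReal.sub_top]
        exact bot_le
      obtain ⟨a, ha⟩ : ∃ a : ℝ, α Q = (a : EReal) := by
        have hbot : α Q ≠ ⊥ := fun h => by simpa [h] using hc Q hQ
        lift α Q to ℝ using ⟨hatop, hbot⟩ with a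
        exact ⟨a, rfl⟩
      obtain ⟨S, hSm, hS1, hS2⟩ := Q.mutuallySingular_singularPart P
      by_cases hQS : Q Sᶜ = 0
      · -- Q is absolutely continuous w.r.t. P
        have hsp : Q.singularPart P = 0 := by
          apply Measure.measure_univ_eq_zero.mp
          have h1 : Q.singularPart P Sᶜ = 0 :=
            le_antisymm (le_trans (Measure.le_iff'.mp (Q.singularPart_le P) Sᶜ) hQS.le)
              (zero_le)
          have : Q.singularPart P univ ≤ Q.singularPart P S + Q.singularPart P Sᶜ := by
            rw [← Set.union_compl_self S]
            exact measure_union_le _ _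
          simpa [hS1, h1] using this
        have hac : Q ≪ P := by
          have := Q.haveLebesgueDecomposition_add P
          rw [hsp, zero_add] at this
          rw [this]
          exact withDensity_absolutelyContinuous P _
        exact le_trans (iInf₂_le X hXv)
          (le_iSup_of_le (⟨Q, hQ, hac⟩ : {Q : Measure Ω // IsProbabilityMeasure Q ∧ Q ≪ P})
            le_rfl)
      · -- the singular part charges Sᶜ : the infimum is ⊥
        set δ : ℝ := (Q Sᶜ).toReal with hδdef
        have hδ : 0 < δ := ENNReal.toReal_pos hQS (measure_ne_top Q _)
        set A : ℝ := ∫ ω in S, -X ω ∂Q with hAdef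
        have key : ∀ n : ℕ,
            (⨅ Y ∈ versions P X, (negExp Q Y - α Q)) ≤ ((A - n * δ - a : ℝ) : EReal) := by
          intro n
          set Yn : Ω → ℝ := S.piecewise X fun _ => (n : ℝ) with hYndef
          have hYnv : Yn ∈ versions P X := by
            refine ⟨Measurable.piecewise hSm hXmeas measurable_const, ?_, ?_⟩
            · obtain ⟨K, hK⟩ := hXbdd
              refine ⟨max K n, fun ω => ?_⟩
              by_cases h : ω ∈ S
              · simp only [hYndef, Set.piecewise_eq_of_mem _ _ _ h]
                exact le_trans (hK ω) (le_max_left _ _)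
              · simp only [hYndef, Set.piecewise_eq_of_notMem _ _ _ h]
                rw [abs_of_nonneg (by positivity)]
                exact le_max_right _ _
            · have hS : ∀ᵐ ω ∂P, ω ∈ S := by
                rw [ae_iff]
                simpa [Set.compl_def] using hS2
              exact hS.mono fun ω hω => Set.piecewise_eq_of_mem _ _ _ hω
          have hint : (∫ ω, -Yn ω ∂Q) = A - n * δ := by
            have hfun : (fun ω => -Yn ω) = S.piecewise (fun ω => -X ω) fun _ => -(n : ℝ) := by
              funext ω
              by_cases h : ω ∈ S <;>
                simp [hYndef, Set.piecewise_eq_of_mem _ _ _, h]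
            rw [hfun, integral_piecewise (f := fun ω => -X ω) hSm
              ((integrable_of_bdd hXmeas.neg (by
                obtain ⟨K, hK⟩ := hXbdd; exact ⟨K, fun ω => by simpa using hK ω⟩)).integrableOn)
              ((integrableOn_const (measure_ne_top Q _)))]
            rw [setIntegral_const]
            simp only [smul_eq_mul, ← hAdef, Measure.real, ← hδdef]
            ring
          refine le_trans (iInf₂_le Yn hYnv) ?_
          have : negExp Q Yn - α Q = ((A - n * δ - a : ℝ) : EReal) := by
            rw [negExp, hint, ha, ← EReal.coe_sub]
          rw [this]
        have hbot : (⨅ Y ∈ versions P X, (negExp Q Y - α Q)) = ⊥ := by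
          rw [EReal.eq_bot_iff_forall_lt]
          intro y
          obtain ⟨n, hn⟩ := exists_nat_gt ((A - a - y) / δ)
          have hlt : A - n * δ - a < y := by
            rw [div_lt_iff₀ hδ] at hn
            nlinarith
          exact lt_of_le_of_lt (key n) (EReal.coe_lt_coe_iff.mpr hlt)
        rw [hbot]
        exact bot_le
    · refine iSup_le fun ⟨Q, hQ, hac⟩ => ?_
      refine le_iSup_of_le (⟨Q, hQ⟩ : {Q : Measure Ω // IsProbabilityMeasure Q}) ?_
      refine le_iInf₂ fun Y hY => ?_
      have hae : ∀ᵐ ω ∂Q, Y ω = X ω := hY.2.2.filter_mono hac.ae_le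
      have : negExp Q Y = negExp Q X := by
        unfold negExp
        norm_cast
        exact integral_congr_ae (hae.mono fun ω h => by simp [h])
      rw [this]
  · refine le_iInf₂ fun Y hY => iSup_le fun Q => ?_
    exact le_trans (iInf₂_le Y hY)
      (le_iSup (fun Q' : {Q : Measure Ω // IsProbabilityMeasure Q} => negExp Q'.1 Y - α Q'.1) Q)
end

section
/- Let ℙ be a probability measure, Q^ℙ a set of probability measures absolutely continuous with respect to ℙ, and α̃: Q^ℙ → ℝ with inf_{Q ∈ Q^ℙ} α̃(Q) > −∞. Define ρ^P and ρ̂^P with penalty α equal to α̃ on Q^ℙ and +∞ elsewhere. If ℙ ⊥ P, then ρ^P ≡ −∞ and ρ̂^P ≡ −∞ on L^∞(P). -/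
open MeasureTheory Set

variable {Ω : Type*} [MeasurableSpace Ω]

/-- If `ℙ ⊥ P`, then both `ρ^P` and `ρ̂^P` (defined via a penalty `α̃` on a set `Q^ℙ` of
`ℙ`-absolutely continuous probability measures, with `inf α̃ > −∞`) are identically `−∞`
on `L^∞(P)`. -/
theorem stmt6 (ℙ P : Measure Ω) [IsProbabilityMeasure ℙ] [IsProbabilityMeasure P]
    (𝒬 : Set (Measure Ω))
    (h𝒬 : ∀ Q ∈ 𝒬, IsProbabilityMeasure Q ∧ Q ≪ ℙ)
    (αt : Measure Ω → ℝ)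
    (hlb : ∃ c : ℝ, ∀ Q ∈ 𝒬, c ≤ αt Q)
    (hsing : ℙ ⟂ₘ P)
    (X : Ω → ℝ) (hXmeas : Measurable X) (hXbdd : ∃ K : ℝ, ∀ ω, |X ω| ≤ K) :
    (⨅ Y ∈ versions P X, ⨆ Q ∈ 𝒬, (negExp Q Y - (αt Q : EReal))) = ⊥ ∧
    (⨆ Q ∈ {Q ∈ 𝒬 | Q ≪ P}, (negExp Q X - (αt Q : EReal))) = ⊥ := by
  obtain ⟨s, hs, hPs, hPsc⟩ := hsing
  obtain ⟨c, hc⟩ := hlb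
  obtain ⟨K, hK⟩ := hXbdd
  constructor
  · -- ρ^P = ⊥
    rw [EReal.eq_bot_iff_forall_lt]
    intro y
    -- choose n with K - c - n < y
    obtain ⟨n, hn⟩ := exists_nat_gt (K - c - y)
    have hn' : K - n - c < y := by linarith
    set Y : Ω → ℝ := fun ω => X ω + sᶜ.indicator (fun _ => (n : ℝ)) ω with hY
    have hYmem : Y ∈ versions P X := by
      refine ⟨hXmeas.add (measurable_const.indicator hs.compl), ⟨K + n, fun ω => ?_⟩, ?_⟩
      · have h1 := abs_le.mp (hK ω)
        have h0 : (0 : ℝ) ≤ n := Nat.cast_nonneg n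
        rw [abs_le]
        show -(K+n) ≤ X ω + sᶜ.indicator (fun _ => (n:ℝ)) ω ∧
          X ω + sᶜ.indicator (fun _ => (n:ℝ)) ω ≤ K + n
        by_cases hω : ω ∈ sᶜ
        · rw [Set.indicator_of_mem hω]
          exact ⟨by linarith, by linarith⟩
        · rw [Set.indicator_of_notMem hω]
          exact ⟨by linarith, by linarith⟩
      · have : ∀ᵐ ω ∂P, ω ∈ s := by
          rw [ae_iff]; exact hPsc
        filter_upwards [this] with ω hω
        simp [hY, Set.indicator_of_notMem (by simpa using hω : ω ∉ sᶜ)]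
    have hle : (⨅ Y ∈ versions P X, ⨆ Q ∈ 𝒬, (negExp Q Y - (αt Q : EReal)))
        ≤ ⨆ Q ∈ 𝒬, (negExp Q Y - (αt Q : EReal)) := biInf_le _ hYmem
    refine lt_of_le_of_lt (hle.trans ?_) (by exact_mod_cast hn' : ((K - n - c : ℝ) : EReal) < (y : EReal))
    refine iSup₂_le fun Q hQ => ?_
    obtain ⟨hQprob, hQac⟩ := h𝒬 Q hQ
    have hQs : Q s = 0 := hQac hPs
    have hQsc : Q sᶜ = 1 := by
      have := measure_add_measure_compl (μ := Q) hs
      rw [hQs, zero_add] at this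
      simpa using this
    have hXint : Integrable X Q := by
      refine (integrable_const K).mono' hXmeas.aestronglyMeasurable ?_
      exact Filter.Eventually.of_forall fun ω => by simpa using hK ω
    have hIint : Integrable (sᶜ.indicator (fun _ => (n : ℝ))) Q :=
      (integrable_const (n : ℝ)).indicator hs.compl
    have hint : (∫ ω, -Y ω ∂Q) = (∫ ω, -X ω ∂Q) - n := by
      have : (∫ ω, -Y ω ∂Q) = ∫ ω, (-X ω - sᶜ.indicator (fun _ => (n : ℝ)) ω) ∂Q := by
        congr 1 with ω; simp [hY]; ring
      have h2 : ∫ ω, (-X ω - sᶜ.indicator (fun _ => (n : ℝ)) ω) ∂Q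
          = (∫ ω, -X ω ∂Q) - ∫ ω, sᶜ.indicator (fun _ => (n : ℝ)) ω ∂Q :=
        integral_sub hXint.neg hIint
      rw [this, h2, integral_indicator_const _ hs.compl, measureReal_def, hQsc]
      simp
    have hbound : (∫ ω, -Y ω ∂Q) ≤ K - n := by
      rw [hint]
      have : (∫ ω, -X ω ∂Q) ≤ K := by
        calc (∫ ω, -X ω ∂Q) ≤ ∫ _, K ∂Q := by
              refine integral_mono hXint.neg (integrable_const K) fun ω => ?_
              have := (abs_le.mp (hK ω)).1; linarith
          _ = K := by simp
      linarith
    have : negExp Q Y - (αt Q : EReal) = (((∫ ω, -Y ω ∂Q) - αt Q : ℝ) : EReal) := by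
      rw [negExp, ← EReal.coe_sub]
    rw [this]
    exact_mod_cast by have := hc Q hQ; linarith
  · -- ρ̂^P = ⊥
    have hempty : {Q ∈ 𝒬 | Q ≪ P} = ∅ := by
      ext Q
      simp only [Set.mem_setOf_eq, Set.mem_empty_iff_false, iff_false, not_and]
      intro hQ hQP
      obtain ⟨hQprob, hQac⟩ := h𝒬 Q hQ
      have hQs : Q s = 0 := hQac hPs
      have hQsc : Q sᶜ = 0 := hQP hPsc
      have : Q Set.univ = 0 := by
        have := measure_union_le (μ := Q) s sᶜ
        simpa [hQs, hQsc] using this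
      simp [measure_univ] at this
    rw [hempty]
    simp
end

section
/- Let ℙ be a probability measure, Q^ℙ ⊆ {Q : Q ≪ ℙ}, α̃ finite on Q^ℙ with inf α̃ > −∞, and let P be a probability measure with ℙ ≪ P. Then ρ^P = ρ̂^P on L^∞(P), and the restriction of ρ^P = ρ̂^P to bounded measurable functions equals ρ(X) = sup_{Q ∈ Q^ℙ}( E_Q[−X] − α̃(Q) ). -/
open MeasureTheory Set

variable {Ω : Type*} [MeasurableSpace Ω]

/-- If `ℙ ≪ P`, then `ρ^P = ρ̂^P` on `L^∞(P)`, and (restricted to bounded measurable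
functions) both coincide with `ρ(X) = sup_{Q ∈ Q^ℙ} (E_Q[−X] − α̃(Q))`. -/
theorem stmt7 (ℙ P : Measure Ω) [IsProbabilityMeasure ℙ] [IsProbabilityMeasure P]
    (𝒬 : Set (Measure Ω))
    (h𝒬 : ∀ Q ∈ 𝒬, IsProbabilityMeasure Q ∧ Q ≪ ℙ)
    (αt : Measure Ω → ℝ)
    (hlb : ∃ c : ℝ, ∀ Q ∈ 𝒬, c ≤ αt Q)
    (hac : ℙ ≪ P)
    (X : Ω → ℝ) (hXmeas : Measurable X) (hXbdd : ∃ K : ℝ, ∀ ω, |X ω| ≤ K) :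
    (⨅ Y ∈ versions P X, ⨆ Q ∈ 𝒬, (negExp Q Y - (αt Q : EReal))) =
      (⨆ Q ∈ {Q ∈ 𝒬 | Q ≪ P}, (negExp Q X - (αt Q : EReal))) ∧
    (⨅ Y ∈ versions P X, ⨆ Q ∈ 𝒬, (negExp Q Y - (αt Q : EReal))) =
      (⨆ Q ∈ 𝒬, (negExp Q X - (αt Q : EReal))) := by
  have hset : {Q ∈ 𝒬 | Q ≪ P} = 𝒬 := by
    ext Q
    simp only [mem_setOf_eq, and_iff_left_iff_imp]
    exact fun hQ => ((h𝒬 Q hQ).2).trans hac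
  have hXmem : X ∈ versions P X := ⟨hXmeas, hXbdd, Filter.Eventually.of_forall fun _ => rfl⟩
  have hkey : ∀ Y ∈ versions P X,
      (⨆ Q ∈ 𝒬, (negExp Q Y - (αt Q : EReal))) = ⨆ Q ∈ 𝒬, (negExp Q X - (αt Q : EReal)) := by
    intro Y hY
    refine iSup_congr fun Q => ?_
    refine iSup_congr fun hQ => ?_
    have hQP : Q ≪ P := ((h𝒬 Q hQ).2).trans hac
    have hae : ∀ᵐ ω ∂Q, Y ω = X ω := hQP.ae_le hY.2.2
    have : negExp Q Y = negExp Q X := by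
      unfold negExp
      congr 1
      exact integral_congr_ae (hae.mono fun ω h => by simp [h])
    rw [this]
  have hinf : (⨅ Y ∈ versions P X, ⨆ Q ∈ 𝒬, (negExp Q Y - (αt Q : EReal))) =
      ⨆ Q ∈ 𝒬, (negExp Q X - (αt Q : EReal)) := by
    apply le_antisymm
    · exact le_of_le_of_eq (biInf_le _ hXmem) (hkey X hXmem)
    · exact le_iInf₂ fun Y hY => (hkey Y hY).ge
  exact ⟨by rw [hinf, hset], hinf⟩
end

section
/- Let ℙ be a probability measure, Q^ℙ ⊆ {Q : Q ≪ ℙ}, α̃ finite on Q^ℙ with inf α̃ > −∞, and P an arbitrary probability measure. Then ρ̂^P(X) ≤ ρ^P(X) ≤ ρ^ℙ(X) = ρ̂^ℙ(X) for all X ∈ L^∞(P) ∩ L^∞(ℙ), i.e., the risk computed under ℙ dominates the risk under any other probability measure. -/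
open MeasureTheory Set

variable {Ω : Type*} [MeasurableSpace Ω]

/-- For an arbitrary probability measure `P`, the ordering
`ρ̂^P(X) ≤ ρ^P(X) ≤ ρ^ℙ(X) = ρ̂^ℙ(X)` holds on `L^∞(P) ∩ L^∞(ℙ)`: the risk computed
under the reference measure `ℙ` dominates the risk under any other measure. -/
theorem stmt8 (ℙ P : Measure Ω) [IsProbabilityMeasure ℙ] [IsProbabilityMeasure P]
    (𝒬 : Set (Measure Ω))
    (h𝒬 : ∀ Q ∈ 𝒬, IsProbabilityMeasure Q ∧ Q ≪ ℙ)
    (αt : Measure Ω → ℝ)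
    (hlb : ∃ c : ℝ, ∀ Q ∈ 𝒬, c ≤ αt Q)
    (X : Ω → ℝ) (hXmeas : Measurable X) (hXbdd : ∃ K : ℝ, ∀ ω, |X ω| ≤ K) :
    (⨆ Q ∈ {Q ∈ 𝒬 | Q ≪ P}, (negExp Q X - (αt Q : EReal))) ≤
      (⨅ Y ∈ versions P X, ⨆ Q ∈ 𝒬, (negExp Q Y - (αt Q : EReal))) ∧
    (⨅ Y ∈ versions P X, ⨆ Q ∈ 𝒬, (negExp Q Y - (αt Q : EReal))) ≤
      (⨅ Y ∈ versions ℙ X, ⨆ Q ∈ 𝒬, (negExp Q Y - (αt Q : EReal))) ∧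
    (⨅ Y ∈ versions ℙ X, ⨆ Q ∈ 𝒬, (negExp Q Y - (αt Q : EReal))) =
      (⨆ Q ∈ {Q ∈ 𝒬 | Q ≪ ℙ}, (negExp Q X - (αt Q : EReal))) := by
  have hXver : ∀ μ : Measure Ω, X ∈ versions μ X := fun μ =>
    ⟨hXmeas, hXbdd, Filter.Eventually.of_forall fun _ => rfl⟩
  have key : ∀ (μ Q : Measure Ω), Q ≪ μ → ∀ Y ∈ versions μ X, negExp Q Y = negExp Q X := by
    intro μ Q hQ Y hY
    unfold negExp
    norm_cast
    exact integral_congr_ae (Filter.Eventually.mono (hQ.ae_le hY.2.2) fun ω h => by simp [h])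
  refine ⟨?_, ?_, ?_⟩
  · refine le_iInf₂ fun Y hY => iSup₂_le fun Q hQ => ?_
    rw [← key P Q hQ.2 Y hY]
    exact le_iSup₂ (f := fun Q (_ : Q ∈ 𝒬) => negExp Q Y - (αt Q : EReal)) Q hQ.1
  · refine le_iInf₂ fun Y hY => iInf₂_le_of_le X (hXver P) (iSup₂_le fun Q hQ => ?_)
    rw [← key ℙ Q (h𝒬 Q hQ).2 Y hY]
    exact le_iSup₂ (f := fun Q (_ : Q ∈ 𝒬) => negExp Q Y - (αt Q : EReal)) Q hQ
  · apply le_antisymm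
    · refine iInf₂_le_of_le X (hXver ℙ) (iSup₂_le fun Q hQ => ?_)
      exact le_iSup₂ (f := fun Q (_ : Q ∈ {Q ∈ 𝒬 | Q ≪ ℙ}) => negExp Q X - (αt Q : EReal))
        Q ⟨hQ, (h𝒬 Q hQ).2⟩
    · refine le_iInf₂ fun Y hY => iSup₂_le fun Q hQ => ?_
      rw [← key ℙ Q hQ.2 Y hY]
      exact le_iSup₂ (f := fun Q (_ : Q ∈ 𝒬) => negExp Q Y - (αt Q : EReal)) Q hQ.1
end

section
/- In the trinomial model above with penalty function α(Q) = Q({ω₂})²/2 − 1 for martingale measures Q with Q({ω₂}) > 0, α(Q) = 0 for martingale measures with Q({ω₂}) = 0, and +∞ otherwise, and with P({ω₁,ω₃}) = 1: for the zero claim X ≡ 0 one has ρ̂^P(X) = 0 while ρ^P(X) = inf_{x₂ ∈ ℝ} sup_{p ∈ [0,1/2]} ( −p·x₂ − p²/2 + 1 ) = 1, so ρ^P ≠ ρ̂^P. -/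
open Set Classical

/-- The penalty function on martingale measures, parametrized by `p = Q({ω₂}) ∈ [0,1/2]`:
`α = p²/2 − 1` for `p > 0` and `α = 0` for `p = 0`. -/
noncomputable def pen (p : ℝ) : ℝ := if p = 0 then 0 else p ^ 2 / 2 - 1

/-- In the trinomial model with `P({ω₁,ω₃}) = 1`, the only martingale measure `Q ≪ P`
has `p = Q({ω₂}) = 0`, so for the zero claim `ρ̂^P(0) = sup_{p=0}(−p·0 − pen p) = 0`,
while `ρ^P(0) = inf_{x₂} sup_{p ∈ [0,1/2]} (−p x₂ − p²/2 + 1) = 1`; hence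
`ρ^P ≠ ρ̂^P` (the penalty fails lower semicontinuity at `p = 0`). -/
theorem stmt11 :
    (⨆ p : ({0} : Set ℝ), ((-(p:ℝ) * 0 - pen (p:ℝ) : ℝ) : EReal)) = (0 : EReal) ∧
    (⨅ x₂ : ℝ, ⨆ p : Set.Icc (0:ℝ) (1/2),
      ((-(p:ℝ) * x₂ - (p:ℝ) ^ 2 / 2 + 1 : ℝ) : EReal)) = (1 : EReal) ∧
    (⨆ p : ({0} : Set ℝ), ((-(p:ℝ) * 0 - pen (p:ℝ) : ℝ) : EReal)) ≠
      (⨅ x₂ : ℝ, ⨆ p : Set.Icc (0:ℝ) (1/2),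
        ((-(p:ℝ) * x₂ - (p:ℝ) ^ 2 / 2 + 1 : ℝ) : EReal)) := by

  have hsup0 : (⨆ p : ({0} : Set ℝ), ((-(p:ℝ) * 0 - pen (p:ℝ) : ℝ) : EReal)) = (0 : EReal) := by
    apply le_antisymm
    · apply iSup_le
      intro p
      have hp : (p : ℝ) = 0 := p.2
      simp [hp, pen]
    · have := le_iSup (fun p : ({0} : Set ℝ) => ((-(p:ℝ) * 0 - pen (p:ℝ) : ℝ) : EReal))
        ⟨0, rfl⟩
      simpa [pen] using this
  have hinf : (⨅ x₂ : ℝ, ⨆ p : Set.Icc (0:ℝ) (1/2),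
      ((-(p:ℝ) * x₂ - (p:ℝ) ^ 2 / 2 + 1 : ℝ) : EReal)) = (1 : EReal) := by
    apply le_antisymm
    · refine le_trans (iInf_le _ 0) ?_
      apply iSup_le
      intro p
      have hp : (0:ℝ) ≤ (p:ℝ) := p.2.1
      have : (-(p:ℝ) * 0 - (p:ℝ) ^ 2 / 2 + 1 : ℝ) ≤ 1 := by nlinarith [sq_nonneg (p:ℝ)]
      exact_mod_cast this
    · apply le_iInf
      intro x₂
      have := le_iSup (fun p : Set.Icc (0:ℝ) (1/2) =>
        ((-(p:ℝ) * x₂ - (p:ℝ) ^ 2 / 2 + 1 : ℝ) : EReal)) ⟨0, by norm_num, by norm_num⟩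
      simpa using this
  exact ⟨hsup0, hinf, by rw [hsup0, hinf]; norm_num⟩
end

section
/- (Halmos–Savage) Let (Ω,F,ℙ) be a probability space and M a nonempty set of ℙ-absolutely continuous probability measures on (Ω,F) that is closed under countable convex combinations. Suppose for each A ∈ F with ℙ(A) > 0 there exists P ∈ M with P(A) > 0. Then there exists P⁰ ∈ M equivalent to ℙ (i.e., P⁰(A) > 0 whenever ℙ(A) > 0). -/
open MeasureTheory Filter
open scoped ENNReal Topology

namespace HSaux

variable {Ω : Type*} [MeasurableSpace Ω]

/-- The set where the density of `P` w.r.t. `ℙ` is positive. -/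
noncomputable def pos (P ℙ : Measure Ω) : Set Ω := {x | 0 < P.rnDeriv ℙ x}

lemma measurableSet_pos (P ℙ : Measure Ω) : MeasurableSet (pos P ℙ) :=
  measurableSet_lt measurable_const (P.measurable_rnDeriv ℙ)

lemma apply_eq_zero_iff (P ℙ : Measure Ω) [IsFiniteMeasure P] [IsFiniteMeasure ℙ]
    (hP : P ≪ ℙ) {A : Set Ω} (hA : MeasurableSet A) :
    P A = 0 ↔ ℙ (pos P ℙ ∩ A) = 0 := by
  have hset : {a | ¬ P.rnDeriv ℙ a = 0} = pos P ℙ := by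
    ext x; simp [pos, pos_iff_ne_zero]
  rw [← Measure.setLIntegral_rnDeriv' hP hA,
    lintegral_eq_zero_iff (P.measurable_rnDeriv ℙ), EventuallyEq, ae_iff]
  simp only [Pi.zero_apply]
  rw [hset, Measure.restrict_apply (measurableSet_pos P ℙ)]

lemma pos_diff_null {ℙ : Measure Ω} [IsFiniteMeasure ℙ] {P : ℕ → Measure Ω} {w : ℕ → ℝ≥0∞}
    (hn : ∀ n, (P n) ≪ ℙ) (hPfin : ∀ n, IsFiniteMeasure (P n))
    (hSfin : IsFiniteMeasure (Measure.sum fun n => w n • P n))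
    (hSP : (Measure.sum fun n => w n • P n) ≪ ℙ)
    (n : ℕ) (hw : w n ≠ 0) :
    ℙ (pos (P n) ℙ \ pos (Measure.sum fun n => w n • P n) ℙ) = 0 := by
  haveI := hSfin; haveI := hPfin n
  set S : Measure Ω := Measure.sum fun n => w n • P n with hS
  set B : Set Ω := pos (P n) ℙ \ pos S ℙ with hBdef
  have hB : MeasurableSet B := (measurableSet_pos _ _).diff (measurableSet_pos _ _)
  have hSB : S B = 0 := by
    rw [apply_eq_zero_iff S ℙ hSP hB, hBdef, Set.inter_diff_self, measure_empty]
  have hPnB : P n B = 0 := by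
    have hle : w n * P n B ≤ S B := by
      have := Measure.le_iff'.mp (Measure.le_sum (fun n => w n • P n) n) B
      simpa [Measure.smul_apply, smul_eq_mul] using this
    rw [hSB, nonpos_iff_eq_zero] at hle
    rcases mul_eq_zero.mp hle with h | h
    · exact absurd h hw
    · exact h
  have h1 := (apply_eq_zero_iff (P n) ℙ (hn n) hB).mp hPnB
  rwa [Set.inter_eq_self_of_subset_right Set.diff_subset] at h1

end HSaux

open HSaux

/-- **Halmos–Savage.** If `M` is a nonempty set of `ℙ`-absolutely continuous probability
measures, closed under countable convex combinations, such that every set of positive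
`ℙ`-measure is charged by some member of `M`, then `M` contains a measure equivalent
to `ℙ`. -/
theorem stmt13 {Ω : Type*} [MeasurableSpace Ω]
    (ℙ : Measure Ω) [IsProbabilityMeasure ℙ]
    (M : Set (Measure Ω)) (hne : M.Nonempty)
    (hprob : ∀ P ∈ M, IsProbabilityMeasure P)
    (hac : ∀ P ∈ M, P ≪ ℙ)
    (hconv : ∀ (P : ℕ → Measure Ω) (w : ℕ → ℝ≥0∞),
      (∀ n, P n ∈ M) → (∑' n, w n) = 1 →
      (Measure.sum fun n => w n • P n) ∈ M)
    (hsupp : ∀ A : Set Ω, MeasurableSet A → 0 < ℙ A → ∃ P ∈ M, 0 < P A) :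
    ∃ P0 ∈ M, ∀ A : Set Ω, MeasurableSet A → 0 < ℙ A → 0 < P0 A := by
  classical
  set S : Set ℝ≥0∞ := (fun P => ℙ (pos P ℙ)) '' M with hSdef
  have hSne : S.Nonempty := hne.image _
  obtain ⟨u, hu_mono, hu_tendsto, hu_mem⟩ := exists_seq_tendsto_sSup hSne (OrderTop.bddAbove S)
  choose Q hQM hQu using fun n => hu_mem n
  set w : ℕ → ℝ≥0∞ := fun n => 2⁻¹ ^ (n + 1) with hwdef
  have hw_sum : ∑' n, w n = 1 := by
    have h1 : ∑' n : ℕ, (2 : ℝ≥0∞)⁻¹ ^ (n + 1) = (∑' n : ℕ, 2⁻¹ ^ n) * 2⁻¹ := by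
      simp_rw [pow_succ]
      rw [ENNReal.tsum_mul_right]
    simp only [hwdef]
    rw [h1, ENNReal.tsum_geometric, ENNReal.one_sub_inv_two, inv_inv,
      ENNReal.mul_inv_cancel two_ne_zero ENNReal.ofNat_ne_top]
  have hw_pos : ∀ n, w n ≠ 0 := by
    intro n
    simp [hwdef, pow_ne_zero, ENNReal.inv_ne_zero]
  set P0 : Measure Ω := Measure.sum fun n => w n • Q n with hP0def
  have hP0M : P0 ∈ M := hconv Q w hQM hw_sum
  haveI hP0prob : IsProbabilityMeasure P0 := hprob _ hP0M
  have hP0ac : P0 ≪ ℙ := hac _ hP0M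
  haveI hQprob : ∀ n, IsProbabilityMeasure (Q n) := fun n => hprob _ (hQM n)
  have hQfin : ∀ n, IsFiniteMeasure (Q n) := fun n => inferInstance
  have hc_le : ∀ P ∈ M, ℙ (pos P ℙ) ≤ sSup S := fun P hP => le_sSup ⟨P, hP, rfl⟩
  have key : ∀ n, ℙ (pos (Q n) ℙ) ≤ ℙ (pos P0 ℙ) := by
    intro n
    have h0 : ℙ (pos (Q n) ℙ \ pos P0 ℙ) = 0 :=
      pos_diff_null (fun m => hac _ (hQM m)) hQfin
        (hP0def ▸ (inferInstance : IsFiniteMeasure P0)) (hP0def ▸ hP0ac) n (hw_pos n)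
    calc ℙ (pos (Q n) ℙ) ≤ ℙ (pos P0 ℙ ∪ (pos (Q n) ℙ \ pos P0 ℙ)) := by
          refine measure_mono fun x hx => ?_
          by_cases hx' : x ∈ pos P0 ℙ
          · exact Or.inl hx'
          · exact Or.inr ⟨hx, hx'⟩
      _ ≤ ℙ (pos P0 ℙ) + ℙ (pos (Q n) ℙ \ pos P0 ℙ) := measure_union_le _ _
      _ = ℙ (pos P0 ℙ) := by rw [h0, add_zero]
  have hP0c : ℙ (pos P0 ℙ) = sSup S := by
    refine le_antisymm (hc_le _ hP0M) ?_
    have h2 : Tendsto u atTop (𝓝 (⨆ n, u n)) := tendsto_atTop_iSup hu_mono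
    have hsup : sSup S = ⨆ n, u n := tendsto_nhds_unique hu_tendsto h2
    rw [hsup]
    exact iSup_le fun n => (hQu n) ▸ key n
  have hSfin : sSup S ≠ ⊤ := by
    refine ne_top_of_le_ne_top (b := 1) ENNReal.one_ne_top ?_
    refine sSup_le ?_
    rintro x ⟨P, hP, rfl⟩
    haveI := hprob _ hP
    exact prob_le_one
  refine ⟨P0, hP0M, fun A hA hℙA => ?_⟩
  by_contra hcon
  push_neg at hcon
  have hP0A : P0 A = 0 := le_antisymm hcon zero_le
  have h1 : ℙ (pos P0 ℙ ∩ A) = 0 := (apply_eq_zero_iff P0 ℙ hP0ac hA).mp hP0A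
  set A' : Set Ω := A \ pos P0 ℙ with hA'def
  have hA'meas : MeasurableSet A' := hA.diff (measurableSet_pos _ _)
  have hℙA' : 0 < ℙ A' := by
    rcases eq_or_lt_of_le (zero_le : 0 ≤ ℙ A') with h2 | h2
    · exfalso
      have h3 : ℙ A ≤ ℙ (pos P0 ℙ ∩ A) + ℙ A' := by
        refine le_trans (measure_mono fun x hx => ?_) (measure_union_le _ _)
        by_cases hx' : x ∈ pos P0 ℙ
        · exact Or.inl ⟨hx', hx⟩
        · exact Or.inr ⟨hx, hx'⟩
      rw [h1, ← h2, add_zero] at h3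
      exact absurd (le_antisymm h3 zero_le) (ne_of_gt hℙA)
    · exact h2
  obtain ⟨Qq, hQqM, hQqA'⟩ := hsupp A' hA'meas hℙA'
  haveI := hprob _ hQqM
  have hδ : 0 < ℙ (pos Qq ℙ ∩ A') := by
    rw [pos_iff_ne_zero]
    intro h2
    exact hQqA'.ne' ((apply_eq_zero_iff Qq ℙ (hac _ hQqM) hA'meas).mpr h2)
  set P' : ℕ → Measure Ω := fun n => if n = 0 then P0 else Qq with hP'def
  have hP'M : ∀ n, P' n ∈ M := by
    intro n
    by_cases h : n = 0 <;> simp [hP'def, h, hP0M, hQqM]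
  have hP'fin : ∀ n, IsFiniteMeasure (P' n) := by
    intro n
    by_cases h : n = 0 <;> simp only [hP'def, h, if_true, if_false] <;> infer_instance
  set R : Measure Ω := Measure.sum fun n => w n • P' n with hRdef
  have hRM : R ∈ M := hconv P' w hP'M hw_sum
  haveI := hprob _ hRM
  have hRac : R ≪ ℙ := hac _ hRM
  have hB0 : ℙ (pos P0 ℙ \ pos R ℙ) = 0 := by
    have := pos_diff_null (ℙ := ℙ) (P := P') (w := w) (fun m => hac _ (hP'M m)) hP'fin
      (hRdef ▸ (inferInstance : IsFiniteMeasure R)) (hRdef ▸ hRac) 0 (hw_pos 0)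
    exact this
  have hB1 : ℙ (pos Qq ℙ \ pos R ℙ) = 0 := by
    have := pos_diff_null (ℙ := ℙ) (P := P') (w := w) (fun m => hac _ (hP'M m)) hP'fin
      (hRdef ▸ (inferInstance : IsFiniteMeasure R)) (hRdef ▸ hRac) 1 (hw_pos 1)
    exact this
  have hdisj : Disjoint (pos P0 ℙ) (pos Qq ℙ ∩ A') := by
    refine Set.disjoint_left.mpr fun x hx hx' => ?_
    exact hx'.2.2 hx
  have hun : ℙ (pos P0 ℙ ∪ (pos Qq ℙ ∩ A')) = ℙ (pos P0 ℙ) + ℙ (pos Qq ℙ ∩ A') :=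
    measure_union hdisj ((measurableSet_pos _ _).inter hA'meas)
  have hle : ℙ (pos P0 ℙ ∪ (pos Qq ℙ ∩ A')) ≤ ℙ (pos R ℙ) := by
    calc ℙ (pos P0 ℙ ∪ (pos Qq ℙ ∩ A'))
        ≤ ℙ (pos R ℙ ∪ ((pos P0 ℙ \ pos R ℙ) ∪ (pos Qq ℙ \ pos R ℙ))) := by
          refine measure_mono fun x hx => ?_
          by_cases hxR : x ∈ pos R ℙ
          · exact Or.inl hxR
          · rcases hx with hx | hx
            · exact Or.inr (Or.inl ⟨hx, hxR⟩)
            · exact Or.inr (Or.inr ⟨hx.1, hxR⟩)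
      _ ≤ ℙ (pos R ℙ) + (ℙ (pos P0 ℙ \ pos R ℙ) + ℙ (pos Qq ℙ \ pos R ℙ)) :=
          le_trans (measure_union_le _ _) (add_le_add le_rfl (measure_union_le _ _))
      _ = ℙ (pos R ℙ) := by rw [hB0, hB1, add_zero, add_zero]
  have hfinal : ℙ (pos P0 ℙ) + ℙ (pos Qq ℙ ∩ A') ≤ ℙ (pos P0 ℙ) + 0 := by
    rw [add_zero, ← hun]
    exact le_trans hle (le_trans (hc_le _ hRM) hP0c.ge)
  have := ENNReal.le_of_add_le_add_left (by rw [hP0c]; exact hSfin) hfinal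
  exact absurd (le_antisymm this zero_le) (ne_of_gt hδ)
end

section
/- Let M ⊆ M₁ be closed under countable convex combinations, and let ℙ be a probability measure that is generalized equivalent to M (every P ∈ M satisfies P ≪ ℙ, and P(A) = 0 for all P ∈ M implies ℙ(A) = 0). Let ρ be a monetary risk measure on bounded measurable functions and define ρ^P(X) = inf_{X̃: P(X̃=X)=1} ρ(X̃). Then for all X ∈ L^∞(ℙ): ρ^ℙ(X) = sup_{P ∈ M} ρ^P(X). -/
open MeasureTheory Set
open scoped ENNReal

/-- The induced risk measure `ρ^P`: infimum of `ρ` over bounded measurable versions of `X`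
under `P`, taken in the extended reals. -/
noncomputable def rhoP {Ω : Type*} [MeasurableSpace Ω] (ρ : (Ω → ℝ) → ℝ)
    (P : Measure Ω) (X : Ω → ℝ) : EReal :=
  sInf {r : EReal | ∃ Y : Ω → ℝ, Measurable Y ∧ (∃ K : ℝ, ∀ ω, |Y ω| ≤ K) ∧
    (∀ᵐ ω ∂P, Y ω = X ω) ∧ r = (ρ Y : EReal)}

section aux

variable {Ω : Type*} [MeasurableSpace Ω]

/-- The "support of the density" of `P` w.r.t. `Q`. -/
private def dsupp (P Q : Measure Ω) : Set Ω := {ω | P.rnDeriv Q ω ≠ 0}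

private lemma meas_dsupp (P Q : Measure Ω) : MeasurableSet (dsupp P Q) :=
  (Measure.measurable_rnDeriv P Q (measurableSet_singleton 0)).compl

/-- Key null-set characterization: for `P ≪ Q`, a set is `P`-null iff its intersection
with the density support is `Q`-null. -/
private lemma key_null {P Q : Measure Ω} [IsFiniteMeasure P] [IsFiniteMeasure Q]
    (h : P ≪ Q) (T : Set Ω) :
    P T = 0 ↔ Q (T ∩ dsupp P Q) = 0 := by
  rw [← Measure.setLIntegral_rnDeriv h T,
    lintegral_eq_zero_iff (Measure.measurable_rnDeriv P Q)]
  simp only [Filter.EventuallyEq, Pi.zero_apply, ae_iff]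
  have hd : {a | ¬ P.rnDeriv Q a = 0} = dsupp P Q := rfl
  rw [hd, Measure.restrict_apply (meas_dsupp P Q), Set.inter_comm]

end aux

/-- If `M` is closed under countable convex combinations and `ℙ` is generalized
equivalent to `M`, then the robust risk measure coincides with the classical one:
`ρ^ℙ(X) = sup_{P ∈ M} ρ^P(X)` for all `X ∈ L^∞(ℙ)`. -/
theorem stmt14 {Ω : Type*} [MeasurableSpace Ω] (ρ : (Ω → ℝ) → ℝ)
    (hpos : ∀ X : Ω → ℝ, Measurable X → (∃ K : ℝ, ∀ ω, |X ω| ≤ K) →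
      (∀ ω, 0 ≤ X ω) → ρ X ≤ 0)
    (hmono : ∀ X Y : Ω → ℝ, Measurable X → (∃ K : ℝ, ∀ ω, |X ω| ≤ K) →
      Measurable Y → (∃ K : ℝ, ∀ ω, |Y ω| ≤ K) → (∀ ω, Y ω ≤ X ω) → ρ X ≤ ρ Y)
    (hcash : ∀ X : Ω → ℝ, Measurable X → (∃ K : ℝ, ∀ ω, |X ω| ≤ K) →
      ∀ a : ℝ, ρ (fun ω => X ω + a) = ρ X - a)
    (ℙ : Measure Ω) [IsProbabilityMeasure ℙ]
    (M : Set (Measure Ω))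
    (hprob : ∀ P ∈ M, IsProbabilityMeasure P)
    (hconv : ∀ (P : ℕ → Measure Ω) (w : ℕ → ℝ≥0∞),
      (∀ n, P n ∈ M) → (∑' n, w n) = 1 →
      (Measure.sum fun n => w n • P n) ∈ M)
    (hac : ∀ P ∈ M, P ≪ ℙ)
    (hge : ∀ A : Set Ω, MeasurableSet A → (∀ P ∈ M, P A = 0) → ℙ A = 0)
    (X : Ω → ℝ) (hXmeas : Measurable X) (hXbdd : ∃ K : ℝ, ∀ ω, |X ω| ≤ K) :
    rhoP ρ ℙ X = ⨆ P ∈ M, rhoP ρ P X := by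
  classical
  -- M is nonempty
  have hMne : M.Nonempty := by
    by_contra h
    rw [Set.not_nonempty_iff_eq_empty] at h
    have h0 := hge univ MeasurableSet.univ (by simp [h])
    simp at h0
  -- easy half: each rhoP P X ≤ rhoP ℙ X
  have hle : ∀ P ∈ M, rhoP ρ P X ≤ rhoP ρ ℙ X := by
    intro P hP
    apply sInf_le_sInf
    rintro r ⟨Y, hYm, hYb, hYae, rfl⟩
    exact ⟨Y, hYm, hYb, hYae.filter_mono (hac P hP).ae_le, rfl⟩
  -- Halmos–Savage
  set S : Measure Ω → Set Ω := fun P => dsupp P ℙ with hSdef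
  set c : ℝ≥0∞ := ⨆ P ∈ M, ℙ (S P) with hc
  have hc1 : c ≤ 1 := by
    refine iSup₂_le fun P hP => ?_
    exact prob_le_one
  have hcfin : c ≠ ∞ := (hc1.trans_lt ENNReal.one_lt_top).ne
  -- a sequence approaching the sup
  obtain ⟨u, humono, hulim, humem⟩ :=
    exists_seq_tendsto_sSup (hMne.image fun P => ℙ (S P)) (OrderTop.bddAbove _)
  choose Pn hPnM hPn using fun n => humem n
  have hsup : (⨆ n, ℙ (S (Pn n))) = c := by
    have h1 : Filter.Tendsto u Filter.atTop (nhds (⨆ n, u n)) := tendsto_atTop_iSup humono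
    have h2 := tendsto_nhds_unique h1 hulim
    rw [sSup_image] at h2
    calc (⨆ n, ℙ (S (Pn n))) = ⨆ n, u n := by simp_rw [hPn]
    _ = c := h2
  -- weights
  set w : ℕ → ℝ≥0∞ := fun n => 2⁻¹ ^ (n + 1) with hw
  have hwne : ∀ n, w n ≠ 0 := fun n =>
    pow_ne_zero _ (ENNReal.inv_ne_zero.2 ENNReal.ofNat_ne_top)
  have hwsum : ∑' n, w n = 1 := by
    have : ∑' n, w n = (∑' n, 2⁻¹ ^ n) * 2⁻¹ := by
      simp_rw [hw, pow_succ]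
      rw [ENNReal.tsum_mul_right]
    rw [this, ENNReal.tsum_geometric, ENNReal.one_sub_inv_two, inv_inv]
    exact ENNReal.mul_inv_cancel (by norm_num) ENNReal.ofNat_ne_top
  -- the dominating measure
  set P0 : Measure Ω := Measure.sum (fun n => w n • Pn n) with hP0def
  have hP0M : P0 ∈ M := hconv Pn w hPnM hwsum
  haveI : IsProbabilityMeasure P0 := hprob _ hP0M
  have hP0ac : P0 ≪ ℙ := hac _ hP0M
  -- null transfer for sums
  have htrans : ∀ (Q' : ℕ → Measure Ω) (v : ℕ → ℝ≥0∞) (T : Set Ω), MeasurableSet T →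
      Measure.sum (fun n => v n • Q' n) T = 0 → ∀ n, v n ≠ 0 → Q' n T = 0 := by
    intro Q' v T hT h0 n hv
    have hle' : v n * Q' n T ≤ Measure.sum (fun n => v n • Q' n) T := by
      rw [Measure.sum_apply _ hT]
      refine le_trans (le_of_eq ?_) (ENNReal.le_tsum n)
      simp [Measure.smul_apply, smul_eq_mul]
    rw [h0, nonpos_iff_eq_zero, mul_eq_zero] at hle'
    exact hle'.resolve_left hv
  -- ℙ (S P0) = c
  have hP0c : ℙ (S P0) = c := by
    refine le_antisymm (le_biSup (fun P => ℙ (S P)) hP0M) ?_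
    rw [← hsup]
    refine iSup_le fun n => ?_
    haveI : IsProbabilityMeasure (Pn n) := hprob _ (hPnM n)
    have h1 : P0 ((S P0)ᶜ) = 0 := by
      rw [key_null hP0ac]
      simp [hSdef]
    have h2 : Pn n ((S P0)ᶜ) = 0 :=
      htrans _ _ _ (meas_dsupp P0 ℙ).compl h1 n (hwne n)
    have h3 : ℙ ((S P0)ᶜ ∩ S (Pn n)) = 0 := (key_null (hac _ (hPnM n)) _).1 h2
    calc ℙ (S (Pn n)) ≤ ℙ (S P0 ∪ ((S P0)ᶜ ∩ S (Pn n))) := by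
          refine measure_mono fun x hx => ?_
          by_cases hx' : x ∈ S P0
          · exact Or.inl hx'
          · exact Or.inr ⟨hx', hx⟩
    _ ≤ ℙ (S P0) + ℙ ((S P0)ᶜ ∩ S (Pn n)) := measure_union_le _ _
    _ = ℙ (S P0) := by rw [h3, add_zero]
  -- every P ∈ M vanishes on (S P0)ᶜ
  have hnull : ∀ P ∈ M, P ((S P0)ᶜ) = 0 := by
    intro P hP
    haveI : IsProbabilityMeasure P := hprob P hP
    set v : ℕ → ℝ≥0∞ := fun n => if n ≤ 1 then 2⁻¹ else 0 with hv
    have hvsum : ∑' n, v n = 1 := by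
      rw [tsum_eq_sum (s := Finset.range 2) (by
        intro n hn
        simp only [Finset.mem_range, not_lt] at hn
        simp [hv, Nat.lt_of_lt_of_le Nat.one_lt_two hn, show ¬ n ≤ 1 by omega])]
      simp [hv, Finset.sum_range_succ]
      rw [ENNReal.inv_two_add_inv_two]
    set Q' : ℕ → Measure Ω := fun n => if n = 0 then P0 else P with hQ'
    have hQ'M : ∀ n, Q' n ∈ M := fun n => by
      by_cases h : n = 0 <;> simp [hQ', h, hP0M, hP]
    set Q : Measure Ω := Measure.sum (fun n => v n • Q' n) with hQdef
    have hQM : Q ∈ M := hconv _ _ hQ'M hvsum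
    haveI : IsProbabilityMeasure Q := hprob _ hQM
    have hQc : ℙ (S Q) ≤ c := le_biSup (fun P => ℙ (S P)) hQM
    have h1 : Q ((S Q)ᶜ) = 0 := by
      rw [key_null (hac _ hQM)]
      simp [hSdef]
    have h2 : P0 ((S Q)ᶜ) = 0 := by
      have := htrans Q' v _ (meas_dsupp Q ℙ).compl h1 0 (by simp [hv])
      simpa [hQ'] using this
    have h3 : P ((S Q)ᶜ) = 0 := by
      have := htrans Q' v _ (meas_dsupp Q ℙ).compl h1 1 (by simp [hv])
      simpa [hQ'] using this
    have h4 : ℙ ((S Q)ᶜ ∩ S P0) = 0 := (key_null hP0ac _).1 h2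
    have h5 : ℙ ((S Q)ᶜ ∩ S P) = 0 := (key_null (hac P hP) _).1 h3
    have hsub : S P0 ∪ ((S P0)ᶜ ∩ S P) ⊆
        S Q ∪ (((S Q)ᶜ ∩ S P0) ∪ ((S Q)ᶜ ∩ S P)) := by
      intro x hx
      by_cases hq : x ∈ S Q
      · exact Or.inl hq
      · rcases hx with h | h
        · exact Or.inr (Or.inl ⟨hq, h⟩)
        · exact Or.inr (Or.inr ⟨hq, h.2⟩)
    have hunion : ℙ (S P0) + ℙ ((S P0)ᶜ ∩ S P) = ℙ (S P0 ∪ ((S P0)ᶜ ∩ S P)) := by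
      rw [measure_union (disjoint_compl_right.mono_right Set.inter_subset_left)
        ((meas_dsupp P0 ℙ).compl.inter (meas_dsupp P ℙ))]
    have hbound : ℙ (S P0 ∪ ((S P0)ᶜ ∩ S P)) ≤ c := by
      calc ℙ (S P0 ∪ ((S P0)ᶜ ∩ S P))
          ≤ ℙ (S Q ∪ (((S Q)ᶜ ∩ S P0) ∪ ((S Q)ᶜ ∩ S P))) := measure_mono hsub
      _ ≤ ℙ (S Q) + ℙ (((S Q)ᶜ ∩ S P0) ∪ ((S Q)ᶜ ∩ S P)) := measure_union_le _ _
      _ ≤ ℙ (S Q) + (ℙ ((S Q)ᶜ ∩ S P0) + ℙ ((S Q)ᶜ ∩ S P)) := by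
          gcongr
          exact measure_union_le _ _
      _ = ℙ (S Q) := by rw [h4, h5, add_zero, add_zero]
      _ ≤ c := hQc
    have h6 : ℙ ((S P0)ᶜ ∩ S P) = 0 := by
      have hle2 : c + ℙ ((S P0)ᶜ ∩ S P) ≤ c + 0 := by
        rw [add_zero, ← hP0c, hunion]
        exact hbound.trans hP0c.ge
      exact nonpos_iff_eq_zero.1 ((ENNReal.add_le_add_iff_left hcfin).1 hle2)
    exact (key_null (hac P hP) _).2 h6
  have hPSc : ℙ ((S P0)ᶜ) = 0 := hge _ (meas_dsupp P0 ℙ).compl hnull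
  -- ℙ ≪ P0
  have hPacP0 : ℙ ≪ P0 := by
    refine Measure.AbsolutelyContinuous.mk fun B hB h0 => ?_
    have hB1 : ℙ (B ∩ S P0) = 0 := (key_null hP0ac B).1 h0
    have hle3 : ℙ B ≤ ℙ (B ∩ S P0) + ℙ ((S P0)ᶜ) := by
      refine (measure_mono fun x hx => ?_).trans (measure_union_le _ _)
      by_cases h : x ∈ S P0
      · exact Or.inl ⟨hx, h⟩
      · exact Or.inr h
    rw [hB1, hPSc, add_zero] at hle3
    exact nonpos_iff_eq_zero.1 hle3
  -- rhoP agrees for equivalent measures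
  have heqset : rhoP ρ ℙ X = rhoP ρ P0 X := by
    unfold rhoP
    congr 1
    ext r
    constructor <;> rintro ⟨Y, h1, h2, h3, h4⟩
    · exact ⟨Y, h1, h2, h3.filter_mono hP0ac.ae_le, h4⟩
    · exact ⟨Y, h1, h2, h3.filter_mono hPacP0.ae_le, h4⟩
  refine le_antisymm ?_ (iSup₂_le hle)
  rw [heqset]
  exact le_biSup (fun P => rhoP ρ P X) hP0M
end

section
/- Let Θ be a separable metric space and θ ↦ P^θ continuous in total variation (for every ε > 0 there is δ > 0 such that d(θ,θ') < δ implies sup_{A ∈ F} |P^θ(A) − P^{θ'}(A)| < ε). Then there exists a countable dense subset {θ_k} of Θ such that the measure ℙ = Σ_{k≥1} 2^{−k} P^{θ_k} dominates the entire family: P^θ ≪ ℙ for every θ ∈ Θ; moreover ℙ is generalized equivalent to {P^θ : θ ∈ Θ}. -/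
open MeasureTheory Set
open scoped ENNReal

/-- If `θ ↦ P^θ` is continuous in total variation on a separable metric parameter space,
then a countable convex combination `ℙ = Σ_k 2^{-(k+1)} P^{θ_k}` over a countable dense
set of parameters dominates the whole family, and is generalized equivalent to it. -/
theorem stmt18 {Ω Θ : Type*} [MeasurableSpace Ω] [MetricSpace Θ]
    [TopologicalSpace.SeparableSpace Θ] [Nonempty Θ]
    (P : Θ → Measure Ω) (hP : ∀ θ, IsProbabilityMeasure (P θ))
    (htv : ∀ ε : ℝ, 0 < ε → ∃ δ : ℝ, 0 < δ ∧ ∀ θ θ' : Θ, dist θ θ' < δ →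
      ∀ A : Set Ω, MeasurableSet A → |(P θ A).toReal - (P θ' A).toReal| < ε) :
    ∃ θseq : ℕ → Θ, DenseRange θseq ∧
      (∀ θ : Θ, P θ ≪ Measure.sum fun k => ((2 : ℝ≥0∞)⁻¹ ^ (k + 1)) • P (θseq k)) ∧
      (∀ A : Set Ω, MeasurableSet A → (∀ θ : Θ, P θ A = 0) →
        (Measure.sum fun k => ((2 : ℝ≥0∞)⁻¹ ^ (k + 1)) • P (θseq k)) A = 0) := by
  obtain ⟨θseq, hdense⟩ := TopologicalSpace.exists_dense_seq Θ
  refine ⟨θseq, hdense, ?_, ?_⟩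
  · intro θ
    refine Measure.AbsolutelyContinuous.mk ?_
    intro A hA h0
    rw [Measure.sum_apply _ hA] at h0
    have hk : ∀ k, P (θseq k) A = 0 := by
      intro k
      have hzero := ENNReal.tsum_eq_zero.mp h0 k
      simp only [Measure.smul_apply, smul_eq_mul, mul_eq_zero] at hzero
      rcases hzero with h | h
      · exact absurd h (pow_ne_zero _ (ENNReal.inv_ne_zero.mpr (by simp)))
      · exact h
    have hfin : P θ A ≠ ∞ := (measure_lt_top _ _).ne
    have hle : ∀ ε : ℝ, 0 < ε → (P θ A).toReal < ε := by
      intro ε hε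
      obtain ⟨δ, hδ, hδε⟩ := htv ε hε
      obtain ⟨k, hkδ⟩ := (Metric.denseRange_iff.mp hdense) θ δ hδ
      have := hδε θ (θseq k) (by rw [dist_comm] at hkδ ⊢; exact hkδ) A hA
      rw [hk k] at this
      simpa [abs_of_nonneg ENNReal.toReal_nonneg] using this
    have : (P θ A).toReal = 0 := by
      by_contra h
      have hpos : 0 < (P θ A).toReal := lt_of_le_of_ne ENNReal.toReal_nonneg (Ne.symm h)
      exact absurd (hle _ hpos) (lt_irrefl _)
    exact (ENNReal.toReal_eq_zero_iff _).mp this |>.resolve_right hfin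
  · intro A hA h0
    rw [Measure.sum_apply _ hA]
    simp [Measure.smul_apply, h0]
end

section
/- Let Θ be a separable metric space, ν a Borel probability measure on Θ, θ ↦ P^θ continuous in total variation, and ℙ(A) = ∫_Θ P^θ(A) ν(dθ) the mixture measure. Then the set Θ⁰ = {θ ∈ Θ : P^θ is not absolutely continuous with respect to ℙ} is open (in particular Borel measurable) and satisfies ν(Θ⁰) = 0. -/
open MeasureTheory Set

lemma stmt19_aux {Ω Θ : Type*} [MeasurableSpace Ω] [MetricSpace Θ]
    [TopologicalSpace.SeparableSpace Θ] [MeasurableSpace Θ] [BorelSpace Θ]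
    (P : Θ → Measure Ω) (hP : ∀ θ, IsProbabilityMeasure (P θ))
    (hmeas : ∀ A : Set Ω, MeasurableSet A → Measurable fun θ => P θ A)
    (htv : ∀ ε : ℝ, 0 < ε → ∃ δ : ℝ, 0 < δ ∧ ∀ θ θ' : Θ, dist θ θ' < δ →
      ∀ A : Set Ω, MeasurableSet A → |(P θ A).toReal - (P θ' A).toReal| < ε)
    (ν : Measure Θ) (ℙ : Measure Ω)
    (hℙ : ∀ A : Set Ω, MeasurableSet A → ℙ A = ∫⁻ θ, P θ A ∂ν)
    (c : ℝ) (hc : 0 < c) :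
    ν {θ : Θ | ∃ A, MeasurableSet A ∧ ℙ A = 0 ∧ c < (P θ A).toReal} = 0 := by
  classical
  set S := {θ : Θ | ∃ A, MeasurableSet A ∧ ℙ A = 0 ∧ c < (P θ A).toReal} with hS
  obtain ⟨δ, hδ, hδtv⟩ := htv (c / 2) (by linarith)
  have hchoice : ∀ θ ∈ S, ∃ A, MeasurableSet A ∧ ℙ A = 0 ∧ c < (P θ A).toReal :=
    fun θ h => h
  choose! A hAm hA0 hAc using hchoice
  haveI : SecondCountableTopology Θ := UniformSpace.secondCountable_of_separable Θ
  obtain ⟨t, hts, htc, htcov⟩ :=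
    TopologicalSpace.countable_cover_nhdsWithin
      (f := fun x => Metric.ball x δ) (s := S)
      (fun x _ => mem_nhdsWithin_of_mem_nhds (Metric.ball_mem_nhds x hδ))
  set A₀ : Set Ω := ⋃ x ∈ t, A x with hA₀
  have hA₀m : MeasurableSet A₀ :=
    MeasurableSet.biUnion htc (fun x hx => hAm x (hts hx))
  have hA₀0 : ℙ A₀ = 0 :=
    (measure_biUnion_null_iff htc).mpr (fun x hx => hA0 x (hts hx))
  have hae : ∀ᵐ θ ∂ν, P θ A₀ = 0 := by
    have h0 : ∫⁻ θ, P θ A₀ ∂ν = 0 := by rw [← hℙ A₀ hA₀m]; exact hA₀0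
    exact (lintegral_eq_zero_iff (hmeas A₀ hA₀m)).mp h0
  have hnull : ν {θ : Θ | P θ A₀ ≠ 0} = 0 := by
    rw [← compl_setOf]
    simpa [ae_iff, compl_setOf] using hae
  refine measure_mono_null (fun θ hθ => ?_) hnull
  obtain ⟨x, hxt, hxball⟩ := mem_iUnion₂.mp (htcov hθ)
  have hxS := hts hxt
  have hdist : dist x θ < δ := by
    rw [dist_comm]; exact hxball
  have htv' := hδtv x θ hdist (A x) (hAm x hxS)
  have hcx := hAc x hxS
  have hpos : 0 < (P θ (A x)).toReal := by
    have := abs_sub_lt_iff.mp htv'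
    linarith
  have hsub : A x ⊆ A₀ := subset_biUnion_of_mem hxt
  have : 0 < P θ A₀ := lt_of_lt_of_le (ENNReal.toReal_pos_iff.mp hpos).1
    (measure_mono hsub)
  exact this.ne'

/-- If `θ ↦ P^θ` is continuous in total variation on a separable metric parameter space
and `ℙ` is the mixture measure with prior `ν`, then the set
`Θ⁰ = {θ : ¬ P^θ ≪ ℙ}` is open (in particular Borel) and `ν(Θ⁰) = 0`. -/
theorem stmt19 {Ω Θ : Type*} [MeasurableSpace Ω] [MetricSpace Θ]
    [TopologicalSpace.SeparableSpace Θ] [MeasurableSpace Θ] [BorelSpace Θ]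
    (P : Θ → Measure Ω) (hP : ∀ θ, IsProbabilityMeasure (P θ))
    (hmeas : ∀ A : Set Ω, MeasurableSet A → Measurable fun θ => P θ A)
    (htv : ∀ ε : ℝ, 0 < ε → ∃ δ : ℝ, 0 < δ ∧ ∀ θ θ' : Θ, dist θ θ' < δ →
      ∀ A : Set Ω, MeasurableSet A → |(P θ A).toReal - (P θ' A).toReal| < ε)
    (ν : Measure Θ) [IsProbabilityMeasure ν]
    (ℙ : Measure Ω)
    (hℙ : ∀ A : Set Ω, MeasurableSet A → ℙ A = ∫⁻ θ, P θ A ∂ν) :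
    IsOpen {θ : Θ | ¬ P θ ≪ ℙ} ∧ ν {θ : Θ | ¬ P θ ≪ ℙ} = 0 := by
  classical
  have hwit : ∀ θ : Θ, ¬ P θ ≪ ℙ →
      ∃ A, MeasurableSet A ∧ ℙ A = 0 ∧ P θ A ≠ 0 := by
    intro θ hθ
    by_contra h
    push_neg at h
    exact hθ (Measure.AbsolutelyContinuous.mk fun s hs h0 => h s hs h0)
  constructor
  · rw [Metric.isOpen_iff]
    intro θ hθ
    obtain ⟨A, hAm, hA0, hAne⟩ := hwit θ hθ
    have hεpos : 0 < (P θ A).toReal :=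
      ENNReal.toReal_pos hAne (measure_ne_top _ _)
    obtain ⟨δ, hδ, hδtv⟩ := htv _ hεpos
    refine ⟨δ, hδ, fun θ' hθ' => ?_⟩
    have hdist : dist θ θ' < δ := by rw [dist_comm]; exact hθ'
    have h1 := abs_sub_lt_iff.mp (hδtv θ θ' hdist A hAm)
    have hpos : 0 < (P θ' A).toReal := by linarith [h1.1]
    intro habs
    have : P θ' A = 0 := habs hA0
    rw [this] at hpos
    simp at hpos
  · have hsub : {θ : Θ | ¬ P θ ≪ ℙ} ⊆
        ⋃ n : ℕ, {θ : Θ | ∃ A, MeasurableSet A ∧ ℙ A = 0 ∧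
          (1 : ℝ) / (n + 1) < (P θ A).toReal} := by
      intro θ hθ
      obtain ⟨A, hAm, hA0, hAne⟩ := hwit θ hθ
      have hεpos : 0 < (P θ A).toReal :=
        ENNReal.toReal_pos hAne (measure_ne_top _ _)
      obtain ⟨n, hn⟩ := exists_nat_one_div_lt hεpos
      exact mem_iUnion.mpr ⟨n, A, hAm, hA0, hn⟩
    refine measure_mono_null hsub (measure_iUnion_null fun n => ?_)
    exact stmt19_aux P hP hmeas htv ν ℙ hℙ (1 / (n + 1))
      (by positivity)
end
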